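/- Let (X,q) be a δ-symmetric quasi-metric space and {x_n} a sequence with lim q(x_n,x_{n+1}) = 0. If {x_n} is not forward-Cauchy, then there exist ε > 0 and subsequences {x_{m_k}}, {x_{n_k}} with k < m_k < n_k such that lim_{k→∞} q(x_{m_k}, x_{n_k}) = lim_{k→∞} q(x_{m_k−1}, x_{n_k}) = lim_{k→∞} q(x_{m_k−1}, x_{n_k−1}) = ε. -/
import Mathlib


open Filter Topology Set

def IsQuasiMetric {X : Type*} (q : X → X → ℝ) : Prop :=
  (∀ x y, 0 ≤ q x y) ∧ (∀ x y, q x y = 0 ↔ x = y) ∧ (∀ x y z, q x y ≤ q x z + q z y)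

theorem stmt4 {X : Type*} (q : X → X → ℝ) (hQ : IsQuasiMetric q)
    (δ : ℝ) (hδ : 0 < δ) (hsym : ∀ x y, q x y ≤ δ * q y x)
    (x : ℕ → X)
    (h0 : Tendsto (fun n => q (x n) (x (n+1))) atTop (𝓝 0))
    (hnc : ¬ (∀ ε : ℝ, 0 < ε → ∃ N : ℕ, ∀ m n : ℕ, N ≤ m → m < n → q (x m) (x n) < ε)) :
    ∃ ε : ℝ, 0 < ε ∧ ∃ m n : ℕ → ℕ, (∀ k, k < m k ∧ m k < n k) ∧
      Tendsto (fun k => q (x (m k)) (x (n k))) atTop (𝓝 ε) ∧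
      Tendsto (fun k => q (x (m k - 1)) (x (n k))) atTop (𝓝 ε) ∧
      Tendsto (fun k => q (x (m k - 1)) (x (n k - 1))) atTop (𝓝 ε) := by
  obtain ⟨hpos, heq, htri⟩ := hQ
  push_neg at hnc
  obtain ⟨ε, hε, H⟩ := hnc
  choose a b ha hab hq using H
  set m : ℕ → ℕ := fun k => a (k + 1) with hm_def
  have hm : ∀ k, k < m k := fun k => lt_of_lt_of_le (Nat.lt_succ_self k) (ha (k + 1))
  have hex : ∀ k, ∃ n, m k < n ∧ ε ≤ q (x (m k)) (x n) :=
    fun k => ⟨b (k + 1), hab (k + 1), hq (k + 1)⟩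
  set n : ℕ → ℕ := fun k => Nat.find (hex k) with hn_def
  have hmn : ∀ k, m k < n k := fun k => (Nat.find_spec (hex k)).1
  have hge : ∀ k, ε ≤ q (x (m k)) (x (n k)) := fun k => (Nat.find_spec (hex k)).2
  have hlt : ∀ k, q (x (m k)) (x (n k - 1)) < ε := by
    intro k
    rcases eq_or_lt_of_le (Nat.succ_le_of_lt (hmn k)) with h | h
    · have h1 : n k - 1 = m k := by omega
      rw [h1, (heq _ _).mpr rfl]; exact hε
    · have h1 : m k < n k - 1 := by omega
      have h2 : n k - 1 < n k := by have := hmn k; omega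
      have h3 := Nat.find_min (hex k) h2
      push_neg at h3
      exact h3 h1
  have hm1 : ∀ k, m k - 1 + 1 = m k := by intro k; have := hm k; omega
  have hn1 : ∀ k, n k - 1 + 1 = n k := by intro k; have := hm k; have := hmn k; omega
  have hdm : Tendsto (fun k => q (x (m k - 1)) (x (m k))) atTop (𝓝 0) := by
    have hmono : Tendsto (fun k => m k - 1) atTop atTop :=
      tendsto_atTop_mono (fun k => by simp only [id_eq]; have := hm k; omega) tendsto_id
    have := h0.comp hmono
    simp only [Function.comp_def, hm1] at this
    exact this
  have hdn : Tendsto (fun k => q (x (n k - 1)) (x (n k))) atTop (𝓝 0) := by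
    have hmono : Tendsto (fun k => n k - 1) atTop atTop :=
      tendsto_atTop_mono (fun k => by simp only [id_eq]; have := hm k; have := hmn k; omega) tendsto_id
    have := h0.comp hmono
    simp only [Function.comp_def, hn1] at this
    exact this
  -- first limit
  have t1 : Tendsto (fun k => q (x (m k)) (x (n k))) atTop (𝓝 ε) := by
    refine tendsto_of_tendsto_of_tendsto_of_le_of_le tendsto_const_nhds
      (h := fun k => ε + q (x (n k - 1)) (x (n k)))
      (by simpa using (tendsto_const_nhds (x := ε)).add hdn) hge ?_
    intro k
    calc q (x (m k)) (x (n k))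
        ≤ q (x (m k)) (x (n k - 1)) + q (x (n k - 1)) (x (n k)) := htri _ _ _
      _ ≤ ε + q (x (n k - 1)) (x (n k)) := by linarith [hlt k]
  -- second limit
  have t2 : Tendsto (fun k => q (x (m k - 1)) (x (n k))) atTop (𝓝 ε) := by
    refine tendsto_of_tendsto_of_tendsto_of_le_of_le
      (g := fun k => q (x (m k)) (x (n k)) - δ * q (x (m k - 1)) (x (m k)))
      (h := fun k => q (x (m k - 1)) (x (m k)) + q (x (m k)) (x (n k)))
      (by simpa using t1.sub (hdm.const_mul δ)) (by simpa using hdm.add t1) ?_ ?_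
    · intro k
      dsimp only
      have h1 : q (x (m k)) (x (n k)) ≤ q (x (m k)) (x (m k - 1)) + q (x (m k - 1)) (x (n k)) :=
        htri _ _ _
      have h2 : q (x (m k)) (x (m k - 1)) ≤ δ * q (x (m k - 1)) (x (m k)) := hsym _ _
      linarith
    · intro k
      dsimp only
      have h1 : q (x (m k - 1)) (x (n k)) ≤ q (x (m k - 1)) (x (m k)) + q (x (m k)) (x (n k)) :=
        htri _ _ _
      linarith
  -- third limit
  have t3 : Tendsto (fun k => q (x (m k - 1)) (x (n k - 1))) atTop (𝓝 ε) := by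
    refine tendsto_of_tendsto_of_tendsto_of_le_of_le
      (g := fun k => q (x (m k - 1)) (x (n k)) - q (x (n k - 1)) (x (n k)))
      (h := fun k => q (x (m k - 1)) (x (n k)) + δ * q (x (n k - 1)) (x (n k)))
      (by simpa using t2.sub hdn) (by simpa using t2.add (hdn.const_mul δ)) ?_ ?_
    · intro k
      dsimp only
      have h1 : q (x (m k - 1)) (x (n k)) ≤
          q (x (m k - 1)) (x (n k - 1)) + q (x (n k - 1)) (x (n k)) := htri _ _ _
      linarith
    · intro k
      dsimp only
      have h1 : q (x (m k - 1)) (x (n k - 1)) ≤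
          q (x (m k - 1)) (x (n k)) + q (x (n k)) (x (n k - 1)) := htri _ _ _
      have h2 : q (x (n k)) (x (n k - 1)) ≤ δ * q (x (n k - 1)) (x (n k)) := hsym _ _
      linarith
  exact ⟨ε, hε, m, n, fun k => ⟨hm k, hmn k⟩, t1, t2, t3⟩
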